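/- arXiv:math/0701414 — 2 statements merged into one kernel-verified Lean document; each statement's English description precedes it below -/
import Mathlib

section
/- (Corollary 1.6, claim (1.48)) Let d ≥ 3, c_0 > 0, and let N ≥ 2 be large enough so that (ℤ/Nℤ)^d has ℓ^∞-diameter bigger than c_0 log N. Then for any j ∈ ℤ and t ≥ 0, on the event G_{j,t} = V_{c_0,j,t} ∩ U_{c_0,j,t}, for every 0 ≤ n ≤ D^j_t, every F ∈ L_1 intersecting C_j contains a segment of length L_0 := ⌊c_0 log N⌋ included in C_j \ X_{[0,n]}. -/
open MeasureTheory Filter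
open scoped ENNReal Classical

namespace DiscCyl

/-- The lattice `ℤ^{d+1}`. -/
abbrev Lat (d : ℕ) := Fin (d + 1) → ℤ

/-- The discrete cylinder `E = (ℤ/Nℤ)^d × ℤ`. -/
abbrev Cyl (d N : ℕ) := (Fin d → ZMod N) × ℤ

instance (N : ℕ) : MeasurableSpace (ZMod N) := ⊤

instance (N : ℕ) : Countable (ZMod N) := by
  cases N with
  | zero => exact inferInstanceAs (Countable ℤ)
  | succ n => exact inferInstanceAs (Countable (Fin (n + 1)))

/-- The canonical projection `π_E : ℤ^{d+1} → E`. -/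
def projE (d N : ℕ) (v : Lat d) : Cyl d N :=
  (fun i => (v i.castSucc : ZMod N), v (Fin.last d))

/-- The `2(d+1)` unit vectors `±e_i` of `ℤ^{d+1}`. -/
def unitVecs (d : ℕ) : Finset (Lat d) :=
  Finset.image (fun p : Fin (d + 1) × Bool => Pi.single p.1 (if p.2 then (1 : ℤ) else -1))
    Finset.univ

/-- One-step transition probability of simple random walk on the cylinder:
each of the `2(d+1)` unit moves of `ℤ^{d+1}` is taken with probability `1/(2(d+1))`
and projected to `E`. -/
noncomputable def stepProb (d N : ℕ) (x y : Cyl d N) : ℝ≥0∞ :=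
  (((unitVecs d).filter fun e => x + projE d N e = y).card : ℝ≥0∞) / (2 * (d + 1))

/-- `Pl` is the family of laws (indexed by the starting point) of simple random walk
on the cylinder `E = (ℤ/Nℤ)^d × ℤ`. -/
def IsCylRW (d N : ℕ) (Pl : Cyl d N → Measure (ℕ → Cyl d N)) : Prop :=
  (∀ x, IsProbabilityMeasure (Pl x)) ∧
    ∀ (x : Cyl d N) (n : ℕ) (γ : ℕ → Cyl d N),
      Pl x {ω | ∀ i ≤ n, ω i = γ i} =
        (if γ 0 = x then 1 else 0) * ∏ i ∈ Finset.range n, stepProb d N (γ i) (γ (i + 1))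

/-- The lattice `ℤ^ν`. -/
abbrev ZLat (ν : ℕ) := Fin ν → ℤ

/-- Unit vectors of `ℤ^ν`. -/
def zUnitVecs (ν : ℕ) : Set (ZLat ν) :=
  {v | ∃ i, v = Pi.single i 1 ∨ v = Pi.single i (-1)}

/-- One-step transition probability of simple random walk on `ℤ^ν`. -/
noncomputable def zStep (ν : ℕ) (x y : ZLat ν) : ℝ≥0∞ :=
  if y - x ∈ zUnitVecs ν then (2 * ν : ℝ≥0∞)⁻¹ else 0

/-- `Ql` is the family of laws of simple random walk on `ℤ^ν`. -/
def IsLatRW (ν : ℕ) (Ql : ZLat ν → Measure (ℕ → ZLat ν)) : Prop :=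
  (∀ x, IsProbabilityMeasure (Ql x)) ∧
    ∀ (x : ZLat ν) (n : ℕ) (γ : ℕ → ZLat ν),
      Ql x {ω | ∀ i ≤ n, ω i = γ i} =
        (if γ 0 = x then 1 else 0) * ∏ i ∈ Finset.range n, zStep ν (γ i) (γ (i + 1))

/-- `q(ν)`: the return probability to the origin of simple random walk on `ℤ^ν`. -/
noncomputable def retProb (ν : ℕ) (Ql : ZLat ν → Measure (ℕ → ZLat ν)) : ℝ :=
  ((Ql 0) {ω | ∃ n : ℕ, 1 ≤ n ∧ ω n = 0}).toReal

/-- Entrance time `H_U` (with value `⊤` if `U` is never entered). -/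
noncomputable def entT {X : Type*} (U : Set X) (ω : ℕ → X) : ℕ∞ :=
  sInf {t : ℕ∞ | ∃ n : ℕ, ω n ∈ U ∧ t = n}

/-- Exit time `T_U`. -/
noncomputable def exitT {X : Type*} (U : Set X) (ω : ℕ → X) : ℕ∞ :=
  entT Uᶜ ω

/-- `after t f ω = t + f (θ_t ω)`, with value `⊤` when `t = ⊤`. -/
noncomputable def after {X : Type*} (t : ℕ∞) (f : (ℕ → X) → ℕ∞) (ω : ℕ → X) : ℕ∞ :=
  t.recTopCoe ⊤ fun m => (m : ℕ∞) + f fun k => ω (k + m)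

/-- The block `C_j = (ℤ/Nℤ)^d × ([(j-3/4)N, (j+3/4)N] ∩ ℤ)`. -/
def Cblk (d N : ℕ) (j : ℤ) : Set (Cyl d N) :=
  {x | ((j : ℝ) - 3 / 4) * N ≤ (x.2 : ℝ) ∧ (x.2 : ℝ) ≤ ((j : ℝ) + 3 / 4) * N}

/-- The block `B_j = (ℤ/Nℤ)^d × [(j-1)N, (j+1)N]`. -/
def Bblk (d N : ℕ) (j : ℤ) : Set (Cyl d N) :=
  {x | (j - 1) * (N : ℤ) ≤ x.2 ∧ x.2 ≤ (j + 1) * (N : ℤ)}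

/-- The block `B̃_j = (ℤ/Nℤ)^d × [(j-2)N+1, (j+2)N-1]`. -/
def Btl (d N : ℕ) (j : ℤ) : Set (Cyl d N) :=
  {x | (j - 2) * (N : ℤ) + 1 ≤ x.2 ∧ x.2 ≤ (j + 2) * (N : ℤ) - 1}

/-- `D^j_1`: time of the first departure from `B̃_j` after the first return to `B_j`. -/
noncomputable def oneExc (d N : ℕ) (j : ℤ) (ω : ℕ → Cyl d N) : ℕ∞ :=
  after (entT (Bblk d N j) ω) (exitT (Btl d N j)) ω

/-- `D^j_k`: time of the `k`-th departure from `B̃_j` (after successive returns to `B_j`). -/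
noncomputable def DD (d N : ℕ) (j : ℤ) : ℕ → (ℕ → Cyl d N) → ℕ∞
  | 0, _ => 0
  | k + 1, ω => after (DD d N j k ω) (oneExc d N j) ω

/-- The law `P` of the walk with initial distribution uniform on `B_0`. -/
noncomputable def lawP (d N : ℕ) (Pl : Cyl d N → Measure (ℕ → Cyl d N)) :
    Measure (ℕ → Cyl d N) :=
  ((N : ℝ≥0∞) ^ d * (2 * N + 1))⁻¹ •
    Measure.sum fun x : Cyl d N => if x ∈ Bblk d N 0 then Pl x else 0

/-- Nearest-neighbour adjacency on the cylinder. -/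
def adj (d N : ℕ) (x y : Cyl d N) : Prop :=
  x ≠ y ∧ ∃ e ∈ unitVecs d, y = x + projE d N e

/-- `x` and `y` are connected by a nearest-neighbour path inside `S`. -/
def connIn (d N : ℕ) (S : Set (Cyl d N)) (x y : Cyl d N) : Prop :=
  Relation.ReflTransGen (fun a b => a ∈ S ∧ b ∈ S ∧ adj d N a b) x y

/-- `S` is a connected set. -/
def IsConnIn (d N : ℕ) (S : Set (Cyl d N)) : Prop :=
  ∀ x ∈ S, ∀ y ∈ S, connIn d N S x y

/-- The boundary `∂U`. -/
def bdry (d N : ℕ) (U : Set (Cyl d N)) : Set (Cyl d N) :=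
  {x | x ∉ U ∧ ∃ y ∈ U, adj d N x y}

/-- `ℓ^∞`-norm on `ℤ^{d+1}`. -/
def linf {d : ℕ} (v : Lat d) : ℕ := Finset.univ.sup fun i => (v i).natAbs

/-- `ℓ^∞`-distance induced on the cylinder. -/
noncomputable def cylDist (d N : ℕ) (x y : Cyl d N) : ℕ :=
  sInf {r : ℕ | ∃ v : Lat d, projE d N v = y - x ∧ linf v = r}

/-- `S` has `ℓ^∞`-diameter at least `L`. -/
def diamGE (d N : ℕ) (S : Set (Cyl d N)) (L : ℕ) : Prop :=
  ∃ x ∈ S, ∃ y ∈ S, L ≤ cylDist d N x y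

/-- `X_{[0,n]}`: the set of points visited up to time `n`. -/
def ran {X : Type*} (ω : ℕ → X) (n : ℕ) : Set X := {y | ∃ i ≤ n, ω i = y}

/-- The set of points visited up to the (possibly infinite) time `t`. -/
def ranE {X : Type*} (ω : ℕ → X) (t : ℕ∞) : Set X :=
  {y | ∃ i : ℕ, (i : ℕ∞) ≤ t ∧ ω i = y}

/-- `L_m`: projections to `E` of `m`-dimensional affine coordinate lattices of `ℤ^{d+1}`. -/
def Lcoll (d N m : ℕ) : Set (Set (Cyl d N)) :=
  {F | ∃ I : Finset (Fin (d + 1)), I.card = m ∧ ∃ y : Lat d,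
      F = (fun v => projE d N (y + v)) '' {v : Lat d | ∀ i ∉ I, v i = 0}}

/-- `A^j_m`: nonempty subsets of `C_j` contained in some `F ∈ L_m`. -/
def Adm (d N : ℕ) (j : ℤ) (m : ℕ) : Set (Finset (Cyl d N)) :=
  {A | A.Nonempty ∧ ↑A ⊆ Cblk d N j ∧ ∃ F ∈ Lcoll d N m, (↑A : Set (Cyl d N)) ⊆ F}

/-- The segment `{x + k·e : 0 ≤ k ≤ L}` (addition via `π_E`). -/
def segment (d N : ℕ) (x : Cyl d N) (e : Lat d) (L : ℕ) : Set (Cyl d N) :=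
  {y | ∃ k : ℕ, k ≤ L ∧ y = x + projE d N ((k : ℤ) • e)}

/-- The event `V_{K,j,t}` (with `k = ⌊t⌋` excursions). -/
def Vev (d N : ℕ) (K : ℝ) (j : ℤ) (k : ℕ) : Set (ℕ → Cyl d N) :=
  {ω | ∀ x ∈ Cblk d N j, ∀ e ∈ unitVecs d, ∃ i : ℕ, (i : ℝ) < Real.sqrt N ∧
      ∀ l : ℕ, i ≤ l → l ≤ i + ⌊K * Real.log N⌋₊ →
        x + projE d N ((l : ℤ) • e) ∉ ranE ω (DD d N j k ω)}

/-- The event `U_{K,j,t}` (with `k = ⌊t⌋` excursions). -/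
def Uev (d N : ℕ) (K : ℝ) (j : ℤ) (k : ℕ) : Set (ℕ → Cyl d N) :=
  {ω | ∀ F ∈ Lcoll d N 2, ∀ n : ℕ, (n : ℕ∞) ≤ DD d N j k ω →
      ∀ O₁ O₂ : Set (Cyl d N),
        O₁ ⊆ (F ∩ Cblk d N j) \ ran ω n → O₂ ⊆ (F ∩ Cblk d N j) \ ran ω n →
        IsConnIn d N O₁ → IsConnIn d N O₂ →
        diamGE d N O₁ ⌊K * Real.log N⌋₊ → diamGE d N O₂ ⌊K * Real.log N⌋₊ →
        ∀ p ∈ O₁, ∀ q ∈ O₂, connIn d N ((F ∩ Cblk d N j) \ ran ω n) p q}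

/-- A (finite) set `S` disconnects the cylinder. -/
def Disconnects (d N : ℕ) (S : Set (Cyl d N)) : Prop :=
  S.Finite ∧ ∃ M₀ : ℕ, ∀ M : ℕ, M₀ ≤ M → ∀ x y : Cyl d N,
    (M : ℤ) ≤ x.2 → y.2 ≤ -(M : ℤ) → ¬ connIn d N Sᶜ x y

/-- The disconnection time `T_N`. -/
noncomputable def discT (d N : ℕ) (ω : ℕ → Cyl d N) : ℕ∞ :=
  sInf {t : ℕ∞ | ∃ n : ℕ, Disconnects d N (ran ω n) ∧ t = n}

/-- `r ≤ t` for `t : ℕ∞` and a real threshold `r` (trivially true when `t = ⊤`). -/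
def geReal (t : ℕ∞) (r : ℝ) : Prop := ∀ n : ℕ, t = (n : ℕ∞) → r ≤ n

/-- `r < t` for `t : ℕ∞` and a real threshold `r` (trivially true when `t = ⊤`). -/
def gtReal (t : ℕ∞) (r : ℝ) : Prop := ∀ n : ℕ, t = (n : ℕ∞) → r < n

/-- `φ_j(z) = E_z[exp(λ Σ_{x∈A} 1{H_x < T_{B̃_j}})]`. -/
noncomputable def phi (d N : ℕ) (Pl : Cyl d N → Measure (ℕ → Cyl d N)) (j : ℤ) (lam : ℝ)
    (A : Finset (Cyl d N)) (z : Cyl d N) : ℝ :=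
  ∫ ω, Real.exp (lam * ∑ x ∈ A, if entT {x} ω < exitT (Btl d N j) ω then (1 : ℝ) else 0)
    ∂(Pl z)

/-- `‖φ_j‖_∞`. -/
noncomputable def phiSup (d N : ℕ) (Pl : Cyl d N → Measure (ℕ → Cyl d N)) (j : ℤ) (lam : ℝ)
    (A : Finset (Cyl d N)) : ℝ :=
  ⨆ z : Cyl d N, phi d N Pl j lam A z

/-- `q_N = sup {P_z[H_F < T_{B̃_j}] : F ∈ L_m, z ∈ ∂F}`. -/
noncomputable def qNval (d N m : ℕ) (Pl : Cyl d N → Measure (ℕ → Cyl d N)) (j : ℤ) : ℝ :=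
  sSup {r : ℝ | ∃ F ∈ Lcoll d N m, ∃ z ∈ bdry d N F,
      r = ((Pl z) {ω | entT F ω < exitT (Btl d N j) ω}).toReal}

/-- The times `τ_k`: `τ_0` is the entrance time of `(ℤ/Nℤ)^d × Nℤ`, and `τ_{k+1}` is the
first time after `τ_k` at which the vertical component has moved by exactly `N`. -/
noncomputable def tauT (d N : ℕ) : ℕ → (ℕ → Cyl d N) → ℕ∞
  | 0, ω => entT {x : Cyl d N | (N : ℤ) ∣ x.2} ω
  | k + 1, ω =>
      (tauT d N k ω).recTopCoe ⊤ fun m =>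
        sInf {t : ℕ∞ | ∃ n : ℕ, m < n ∧ ((ω n).2 - (ω m).2).natAbs = N ∧ t = n}

/-- `*`-adjacency on `ℤ²`. -/
def starAdj (x y : ℤ × ℤ) : Prop :=
  x ≠ y ∧ (x.1 - y.1).natAbs ≤ 1 ∧ (x.2 - y.2).natAbs ≤ 1


lemma projE_add (d N : ℕ) (u v : Lat d) :
    projE d N (u + v) = projE d N u + projE d N v := by
  simp only [projE, Prod.mk_add_mk]
  refine Prod.ext ?_ ?_
  · funext i
    simp [Pi.add_apply]
  · simp [Pi.add_apply]

lemma single_mem_unitVecs (d : ℕ) (i : Fin (d + 1)) :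
    Pi.single i (1 : ℤ) ∈ unitVecs d := by
  unfold unitVecs
  exact Finset.mem_image.mpr ⟨(i, true), Finset.mem_univ _, by simp⟩

lemma natCast_smul_single (d : ℕ) (i : Fin (d + 1)) (l : ℤ) :
    l • Pi.single i (1 : ℤ) = (Pi.single i l : Lat d) := by
  funext m
  simp [Pi.single_apply, mul_ite]

lemma cylDist_le_half (d N : ℕ) (hN : 2 ≤ N) (a b : Fin d → ZMod N) :
    cylDist d N (a, (0 : ℤ)) (b, (0 : ℤ)) ≤ N / 2 := by
  classical
  haveI : NeZero N := ⟨by omega⟩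
  set w : Lat d := fun i => Fin.lastCases (0 : ℤ)
      (fun i' => if ((b - a) i').val ≤ N / 2 then (((b - a) i').val : ℤ)
                 else (((b - a) i').val : ℤ) - N) i with hw
  have hproj : projE d N w = (b, (0 : ℤ)) - (a, (0 : ℤ)) := by
    refine Prod.ext ?_ ?_
    · funext i'
      simp only [projE, hw, Fin.lastCases_castSucc]
      split
      · simp [ZMod.natCast_rightInverse ((b - a) i'), Pi.sub_apply]
      · push_cast
        simp [ZMod.natCast_rightInverse ((b - a) i'), ZMod.natCast_self, Pi.sub_apply]
    · simp [projE, hw, Fin.lastCases_last]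
  have hlinf : linf w ≤ N / 2 := by
    refine Finset.sup_le fun i _ => ?_
    refine Fin.lastCases ?_ (fun i' => ?_) i
    · simp [hw, Fin.lastCases_last]
    · simp only [hw, Fin.lastCases_castSucc]
      have hv : ((b - a) i').val < N := ZMod.val_lt _
      split
      · next h => omega
      · next h => omega
  calc cylDist d N (a, (0 : ℤ)) (b, (0 : ℤ)) ≤ linf w :=
        Nat.sInf_le ⟨w, hproj, rfl⟩
    _ ≤ N / 2 := hlinf

lemma sqrt_le_aux (N : ℕ) : Real.sqrt N ≤ (N : ℝ) / 4 + 1 := by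
  have h1 : (0 : ℝ) ≤ (N : ℝ) := Nat.cast_nonneg N
  nlinarith [Real.sq_sqrt h1, sq_nonneg (Real.sqrt (N : ℝ) - 2)]

lemma key_arith (N : ℕ) (i L₀ : ℕ) (hi : (i : ℝ) < Real.sqrt N)
    (hL : L₀ < N / 2) : (i : ℝ) + (L₀ : ℝ) < 3 * (N : ℝ) / 4 := by
  have h1 : (L₀ : ℝ) + 1 ≤ ((N / 2 : ℕ) : ℝ) := by exact_mod_cast hL
  have h2 : ((N / 2 : ℕ) : ℝ) ≤ (N : ℝ) / 2 := by
    simpa using (Nat.cast_div_le (m := N) (n := 2) (α := ℝ))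
  have h3 := sqrt_le_aux N
  linarith

/-- **Corollary 1.6, claim (1.48).** On `G_{j,t} = V_{c₀,j,t} ∩ U_{c₀,j,t}`, for any
`0 ≤ n ≤ D^j_t`, every `F ∈ L_1` intersecting `C_j` contains a segment of length
`L₀ = ⌊c₀ log N⌋` included in `C_j \ X_{[0,n]}`. -/
theorem statement_10 (d N : ℕ) (hd : 3 ≤ d) (hN : 2 ≤ N) (c₀ : ℝ) (hc₀ : 0 < c₀)
    (hdiam : ∃ a b : Fin d → ZMod N,
      c₀ * Real.log N < cylDist d N (a, (0 : ℤ)) (b, (0 : ℤ)))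
    (j : ℤ) (k : ℕ) (ω : ℕ → Cyl d N)
    (hω : ω ∈ Vev d N c₀ j k ∩ Uev d N c₀ j k)
    (n : ℕ) (hn : (n : ℕ∞) ≤ DD d N j k ω)
    (F : Set (Cyl d N)) (hF : F ∈ Lcoll d N 1) (hFC : (F ∩ Cblk d N j).Nonempty) :
    ∃ x : Cyl d N, ∃ e ∈ unitVecs d,
      segment d N x e ⌊c₀ * Real.log N⌋₊ ⊆ F ∧
      segment d N x e ⌊c₀ * Real.log N⌋₊ ⊆ Cblk d N j \ ran ω n := by
  classical
  obtain ⟨hV, hU⟩ := hω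
  simp only [Vev, Set.mem_setOf_eq] at hV
  obtain ⟨I, hIcard, y, hFdef⟩ := hF
  obtain ⟨i₀, rfl⟩ := Finset.card_eq_one.mp hIcard
  set L₀ := ⌊c₀ * Real.log N⌋₊ with hL₀def
  have hN1 : (2 : ℝ) ≤ (N : ℝ) := by exact_mod_cast hN
  have hL₀N : L₀ < N / 2 := by
    obtain ⟨a, b, hab⟩ := hdiam
    have h1 : (L₀ : ℝ) ≤ c₀ * Real.log N :=
      Nat.floor_le (mul_nonneg hc₀.le (Real.log_nonneg (by linarith)))
    have h2 : ((cylDist d N (a, (0 : ℤ)) (b, (0 : ℤ)) : ℕ) : ℝ) ≤ ((N / 2 : ℕ) : ℝ) := by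
      exact_mod_cast cylDist_le_half d N hN a b
    have h3 : (L₀ : ℝ) < ((N / 2 : ℕ) : ℝ) := lt_of_le_of_lt h1 (lt_of_lt_of_le hab h2)
    exact_mod_cast h3
  have hmemF : ∀ t : ℤ, projE d N (y + Pi.single i₀ t) ∈ F := by
    intro t
    rw [hFdef]
    exact ⟨Pi.single i₀ t, fun i hi => Pi.single_eq_of_ne (by simpa using hi) _, rfl⟩
  have hrepF : ∀ z ∈ F, ∃ t : ℤ, z = projE d N (y + Pi.single i₀ t) := by
    intro z hz
    rw [hFdef] at hz
    obtain ⟨v, hv, rfl⟩ := hz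
    refine ⟨v i₀, ?_⟩
    have : v = Pi.single i₀ (v i₀) := by
      funext m
      by_cases hm : m = i₀
      · subst hm; simp
      · simp [Pi.single_eq_of_ne hm, hv m (by simpa using hm)]
    rw [← this]
  -- the main construction, given a good base point on the line
  have main : ∀ t₀ : ℤ, projE d N (y + Pi.single i₀ t₀) ∈ Cblk d N j →
      (∀ l : ℕ, (l : ℝ) < 3 * (N : ℝ) / 4 →
        projE d N (y + Pi.single i₀ (t₀ + (l : ℤ))) ∈ Cblk d N j) →
      ∃ x : Cyl d N, ∃ e ∈ unitVecs d,
        segment d N x e L₀ ⊆ F ∧ segment d N x e L₀ ⊆ Cblk d N j \ ran ω n := by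
    intro t₀ hx₀C hstep
    set e : Lat d := Pi.single i₀ (1 : ℤ) with he_def
    have he : e ∈ unitVecs d := single_mem_unitVecs d i₀
    set x₀ : Cyl d N := projE d N (y + Pi.single i₀ t₀) with hx₀def
    obtain ⟨i, hi, hseg⟩ := hV x₀ hx₀C e he
    have hpt : ∀ m : ℕ, x₀ + projE d N ((i : ℤ) • e) + projE d N ((m : ℤ) • e) =
        projE d N (y + Pi.single i₀ (t₀ + ((i + m : ℕ) : ℤ))) := by
      intro m
      rw [hx₀def, he_def, natCast_smul_single, natCast_smul_single,
        ← projE_add, ← projE_add]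
      congr 1
      funext p
      by_cases hp : p = i₀
      · subst hp
        simp only [Pi.add_apply, Pi.single_eq_same]
        push_cast
        ring
      · simp [Pi.single_eq_of_ne hp]
    have hpt2 : ∀ m : ℕ, x₀ + projE d N ((i : ℤ) • e) + projE d N ((m : ℤ) • e) =
        x₀ + projE d N (((i + m : ℕ) : ℤ) • e) := by
      intro m
      rw [add_assoc, ← projE_add]
      congr 2
      push_cast
      rw [add_smul]
    have hbound : ∀ m : ℕ, m ≤ L₀ → ((i + m : ℕ) : ℝ) < 3 * (N : ℝ) / 4 := by
      intro m hm
      have h1 := key_arith N i L₀ hi hL₀N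
      have h2 : (m : ℝ) ≤ (L₀ : ℝ) := by exact_mod_cast hm
      push_cast
      linarith
    refine ⟨x₀ + projE d N ((i : ℤ) • e), e, he, ?_, ?_⟩
    · rintro z ⟨m, hm, rfl⟩
      rw [hpt m]
      exact hmemF _
    · rintro z ⟨m, hm, rfl⟩
      constructor
      · rw [hpt m]
        exact hstep (i + m) (hbound m hm)
      · intro hzran
        have hnot := hseg (i + m) (Nat.le_add_right i m) (by omega)
        rw [← hpt2 m] at hnot
        obtain ⟨p, hp, hpz⟩ := hzran
        exact hnot ⟨p, le_trans (by exact_mod_cast hp) hn, hpz⟩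
  -- case on the direction of the line F
  rcases Fin.eq_castSucc_or_eq_last i₀ with ⟨i', rfl⟩ | rfl
  · -- horizontal line: vertical coordinate unchanged
    obtain ⟨z, hzF, hzC⟩ := hFC
    obtain ⟨t₀, rfl⟩ := hrepF z hzF
    refine main t₀ hzC ?_
    intro l _
    have h2 : (projE d N (y + Pi.single i'.castSucc (t₀ + (l : ℤ)))).2 =
        (projE d N (y + Pi.single i'.castSucc t₀)).2 := by
      simp [projE, Pi.single_eq_of_ne (Fin.castSucc_lt_last i').ne']
    simp only [Cblk, Set.mem_setOf_eq] at hzC ⊢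
    rw [h2]
    exact hzC
  · -- vertical line: start from height j * N
    set t₀ : ℤ := j * N - y (Fin.last d) with ht₀
    have hsnd : ∀ s : ℤ, (projE d N (y + Pi.single (Fin.last d) (t₀ + s))).2 =
        j * N + s := by
      intro s
      simp [projE, ht₀]
      ring
    have hCmem : ∀ s : ℤ, 0 ≤ s → (s : ℝ) < 3 * (N : ℝ) / 4 →
        projE d N (y + Pi.single (Fin.last d) (t₀ + s)) ∈ Cblk d N j := by
      intro s hs0 hs
      simp only [Cblk, Set.mem_setOf_eq, hsnd s]
      have hs0' : (0 : ℝ) ≤ (s : ℝ) := by exact_mod_cast hs0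
      push_cast
      constructor <;> nlinarith
    refine main t₀ ?_ ?_
    · have := hCmem 0 le_rfl (by linarith)
      simpa using this
    · intro l hl
      exact hCmem (l : ℤ) (Int.ofNat_nonneg l) (by exact_mod_cast hl)

end DiscCyl
end

section
/- (Inequality (1.20)) Let d ≥ 3. There is a constant c depending only on d such that for all N ≥ 2, all j ∈ ℤ and every nonempty subset A of C_j, P[H_A < D^j_1] ≤ c |A| / N^{d−1}, where P is the law of the walk with initial distribution uniform on B_0. -/
open MeasureTheory Filter
open scoped ENNReal Classical

namespace DiscCyl

/-!
Before `D¹` the walk sits in `B̃_j`, so `P[H_A < D¹] ≤ ∑_{a ∈ A} ∑_n P[X_n = a, n < D¹]`.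
The law `P` is invariant under horizontal translations, so each inner sum is `N^{-d}` times
the expected number of times `n < D¹` at which the vertical coordinate sits at height `a.2`.
That coordinate performs a lazy simple random walk, so `|X_n.2 - a.2|` is a submartingale
whose drift at height `a.2` is `1/(d+1)`; up to `D¹` it stays below `3N`, and optional stopping
bounds the expected number of such times by `3(d+1)N`. Altogether
`P[H_A < D¹] ≤ 3(d+1) |A| N / N^d`.
-/

instance (N : ℕ) : MeasurableSingletonClass (ZMod N) := ⟨fun _ => trivial⟩

section HittingTimes

variable {X : Type*} {U : Set X} {ω : ℕ → X}

lemma entT_le_coe_iff {n : ℕ} : entT U ω ≤ n ↔ ∃ m ≤ n, ω m ∈ U := by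
  refine ⟨fun h => ?_, fun ⟨m, hmn, hm⟩ => ?_⟩
  · by_contra! hU
    have : ((n + 1 : ℕ) : ℕ∞) ≤ entT U ω := le_sInf fun t ⟨m, hm, ht⟩ => by
      subst ht
      exact_mod_cast (show n + 1 ≤ m by by_contra! hlt; exact hU m (by omega) hm)
    exact absurd (this.trans h) (by exact_mod_cast Nat.not_succ_le_self n)
  · exact (sInf_le (show (m : ℕ∞) ∈ {t : ℕ∞ | ∃ k : ℕ, ω k ∈ U ∧ t = k} from
      ⟨m, hm, rfl⟩)).trans (by exact_mod_cast hmn)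

lemma entT_eq_coe_iff {n : ℕ} : entT U ω = n ↔ ω n ∈ U ∧ ∀ m < n, ω m ∉ U := by
  refine ⟨fun h => ?_, fun ⟨hn, hbefore⟩ => le_antisymm (entT_le_coe_iff.2 ⟨n, le_rfl, hn⟩) ?_⟩
  · have hbefore : ∀ m < n, ω m ∉ U := fun m hm hmU => by
      have := entT_le_coe_iff.2 ⟨m, le_rfl, hmU⟩
      rw [h] at this
      exact absurd (Nat.cast_le.1 this) (by omega)
    obtain ⟨m, hmn, hm⟩ := entT_le_coe_iff.1 h.le
    obtain rfl : m = n := by by_contra hne; exact hbefore m (by omega) hm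
    exact ⟨hm, hbefore⟩
  · refine le_sInf fun t ⟨m, hm, ht⟩ => ?_
    subst ht
    exact_mod_cast (show n ≤ m by by_contra! hlt; exact hbefore m hlt hm)

lemma dependsOn_entT_le (U : Set X) (n : ℕ) :
    DependsOn (fun ω : ℕ → X => entT U ω ≤ n) (Set.Iic n) := fun ω ω' h => by
  simp only [entT_le_coe_iff]
  exact propext <| exists_congr fun m => and_congr_right fun hm => by rw [h m hm]

lemma dependsOn_entT_eq (U : Set X) (n : ℕ) :
    DependsOn (fun ω : ℕ → X => entT U ω = n) (Set.Iic n) := fun ω ω' h => by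
  simp only [entT_eq_coe_iff, h n (Set.mem_Iic.2 le_rfl)]
  exact propext <| and_congr_right fun _ => forall₂_congr fun m hm => by
    rw [h m (Set.mem_Iic.2 hm.le)]

lemma entT_comp {Y : Type*} (f : X → Y) (V : Set Y) :
    entT V (fun k => f (ω k)) = entT (f ⁻¹' V) ω := rfl

lemma after_le_coe_iff (t : ℕ∞) (f : (ℕ → X) → ℕ∞) {n : ℕ} :
    after t f ω ≤ n ↔ ∃ r ≤ n, t = r ∧ f (fun k => ω (k + r)) ≤ (n - r : ℕ) := by
  cases t with
  | top => simp [after]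
  | coe r =>
    have hiff : ∀ s : ℕ∞, (r : ℕ∞) + s ≤ n ↔ r ≤ n ∧ s ≤ (n - r : ℕ) := fun s => by
      cases s with
      | top => simp
      | coe s => norm_cast; omega
    simp only [after, ENat.recTopCoe_natCast, ENat.natCast_inj, hiff]
    exact ⟨fun ⟨hr, hs⟩ => ⟨r, hr, rfl, hs⟩, fun ⟨_, hr, he, hs⟩ => he ▸ ⟨hr, hs⟩⟩

end HittingTimes

section MarkovChain

open Set

variable {X : Type*}

noncomputable def pathWeight (p : X → X → ℝ≥0∞) (x : X) (n : ℕ) (γ : ℕ → X) : ℝ≥0∞ :=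
  (if γ 0 = x then 1 else 0) * ∏ i ∈ Finset.range n, p (γ i) (γ (i + 1))

def IsMarkovLaw [MeasurableSpace X] (p : X → X → ℝ≥0∞) (Pl : X → Measure (ℕ → X)) : Prop :=
  ∀ x n γ, Pl x {ω | ∀ i ≤ n, ω i = γ i} = pathWeight p x n γ

def padPath (n : ℕ) (q : Fin (n + 1) → X) : ℕ → X := fun k => q ⟨min k n, by omega⟩

def snocPath (n : ℕ) (ω : ℕ → X) (w : X) : ℕ → X := fun k => if k ≤ n then ω k else w

variable {n : ℕ}

lemma padPath_of_le (q : Fin (n + 1) → X) {k : ℕ} (hk : k ≤ n) :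
    padPath n q k = q ⟨k, by omega⟩ := by
  simp [padPath, min_eq_left hk]

lemma padPath_snoc (q : Fin (n + 1) → X) (w : X) :
    padPath (n + 1) (Fin.snoc q w) = snocPath n (padPath n q) w := by
  funext k
  by_cases hk : k ≤ n
  · rw [padPath_of_le _ (by omega), snocPath, if_pos hk, padPath_of_le _ hk]
    exact Fin.snoc_castSucc (α := fun _ => X) (i := ⟨k, by omega⟩) ..
  · rw [snocPath, if_neg hk]
    simp [padPath, show min k (n + 1) = n + 1 by omega, Fin.snoc]

lemma snocPath_of_le (ω : ℕ → X) (w : X) {k : ℕ} (hk : k ≤ n) : snocPath n ω w k = ω k :=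
  if_pos hk

lemma snocPath_succ (ω : ℕ → X) (w : X) : snocPath n ω w (n + 1) = w :=
  if_neg (by omega)

lemma dependsOn_snocPath (w : X) : DependsOn (fun ω => snocPath n ω w) (Iic n) :=
  fun ω ω' h => funext fun k => by
    by_cases hk : k ≤ n
    · simp only [snocPath, if_pos hk, h k hk]
    · simp only [snocPath, if_neg hk]

lemma entT_le_snocPath {U : Set X} {ω : ℕ → X} (w : X) (h : entT U ω ≤ n) :
    entT U (snocPath n ω w) ≤ (n + 1 : ℕ) :=
  le_trans (((dependsOn_entT_le U n) fun i hi => snocPath_of_le ω w (mem_Iic.1 hi)).mpr h)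
    (by exact_mod_cast n.le_succ)

lemma iUnion_cylinder_padPath :
    ⋃ q : Fin (n + 1) → X, {ω : ℕ → X | ∀ i ≤ n, ω i = padPath n q i} = univ :=
  eq_univ_of_forall fun ω => mem_iUnion.2 ⟨fun i => ω i, fun i hi => by rw [padPath_of_le _ hi]⟩

lemma pairwise_disjoint_cylinder_padPath :
    Pairwise (Function.onFun Disjoint
      fun q : Fin (n + 1) → X => {ω : ℕ → X | ∀ i ≤ n, ω i = padPath n q i}) :=
  fun q q' hne => disjoint_left.2 fun ω hq hq' => hne <| funext fun i => by
    have := (hq i (by omega)).symm.trans (hq' i (by omega))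
    rwa [padPath_of_le _ (by omega), padPath_of_le _ (by omega)] at this

lemma dependsOn_pathWeight (p : X → X → ℝ≥0∞) (x : X) :
    DependsOn (pathWeight p x n) (Iic n) := fun γ γ' h => by
  simp only [mem_Iic] at h
  rw [pathWeight, pathWeight, h 0 (Nat.zero_le n)]
  congr 1
  refine Finset.prod_congr rfl fun i hi => ?_
  rw [Finset.mem_range] at hi
  rw [h i hi.le, h (i + 1) hi]

lemma pathWeight_snocPath (p : X → X → ℝ≥0∞) (x : X) (γ : ℕ → X) (w : X) :
    pathWeight p x (n + 1) (snocPath n γ w) = pathWeight p x n γ * p (γ n) w := by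
  rw [pathWeight, Finset.prod_range_succ, ← mul_assoc, snocPath_of_le γ w le_rfl,
    snocPath_succ]
  congr 1
  exact dependsOn_pathWeight p x fun i hi => snocPath_of_le γ w hi

lemma pathWeight_add_const [AddGroup X] {p : X → X → ℝ≥0∞} (hp : ∀ a b t, p (a + t) (b + t) = p a b)
    (x t : X) (γ : ℕ → X) :
    pathWeight p (x + t) n (fun k => γ k + t) = pathWeight p x n γ := by
  simp only [pathWeight, add_left_inj, hp]

end MarkovChain

section MarkovLaw

open Set

variable {X : Type*} [MeasurableSpace X] [MeasurableSingletonClass X] [Countable X]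
  {p : X → X → ℝ≥0∞} {Pl : X → Measure (ℕ → X)} {n : ℕ}

lemma measurableSet_cylinder (n : ℕ) (γ : ℕ → X) :
    MeasurableSet {ω : ℕ → X | ∀ i ≤ n, ω i = γ i} := by
  simp only [ofPred_forall]
  exact .iInter fun i => .iInter fun _ =>
    measurableSet_eq_fun (measurable_pi_apply i) measurable_const

lemma measurableSet_of_dependsOn {S : Set (ℕ → X)} (hS : DependsOn (· ∈ S) (Iic n)) :
    MeasurableSet S := by
  have : S = ⋃ q ∈ {q : Fin (n + 1) → X | padPath n q ∈ S},
      {ω : ℕ → X | ∀ i ≤ n, ω i = padPath n q i} := by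
    ext ω
    simp only [mem_iUnion, mem_ofPred_eq, exists_prop]
    refine ⟨fun hω => ⟨fun i => ω i, ?_, fun i hi => by rw [padPath_of_le _ hi]⟩,
      fun ⟨q, hq, hω⟩ => ?_⟩
    · exact (hS (x := ω) fun i hi => by rw [padPath_of_le _ (mem_Iic.1 hi)]).mp hω
    · exact (hS fun i hi => (hω i (mem_Iic.1 hi)).symm).mp hq
  rw [this]
  exact .biUnion (to_countable _) fun q _ => measurableSet_cylinder n _

lemma measurable_of_dependsOn {β : Type*} [MeasurableSpace β] {f : (ℕ → X) → β}
    (hf : DependsOn f (Iic n)) : Measurable f :=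
  fun T _ => measurableSet_of_dependsOn (n := n) fun ω ω' h => by
    simp only [mem_preimage, hf h]

lemma IsMarkovLaw.lintegral_eq_tsum (hPl : IsMarkovLaw p Pl) {f : (ℕ → X) → ℝ≥0∞}
    (hf : DependsOn f (Iic n)) (x : X) :
    ∫⁻ ω, f ω ∂Pl x
      = ∑' q : Fin (n + 1) → X, f (padPath n q) * pathWeight p x n (padPath n q) := by
  rw [← setLIntegral_univ, ← iUnion_cylinder_padPath (n := n),
    lintegral_iUnion (fun q => measurableSet_cylinder n _) pairwise_disjoint_cylinder_padPath]
  refine tsum_congr fun q => ?_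
  rw [setLIntegral_congr_fun (measurableSet_cylinder n _)
      (fun ω hω => hf fun i hi => hω i (mem_Iic.1 hi)),
    setLIntegral_const, hPl]

lemma IsMarkovLaw.lintegral_eq_lintegral_tsum_step (hPl : IsMarkovLaw p Pl)
    {F : (ℕ → X) → ℝ≥0∞} (hF : DependsOn F (Iic (n + 1))) (x : X) :
    ∫⁻ ω, F ω ∂Pl x = ∫⁻ ω, ∑' w, p (ω n) w * F (snocPath n ω w) ∂Pl x := by
  have hG : DependsOn (fun ω => ∑' w, p (ω n) w * F (snocPath n ω w)) (Iic n) :=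
    fun ω ω' h => by
      simp only [h n (mem_Iic.2 le_rfl), dependsOn_snocPath _ h]
  rw [hPl.lintegral_eq_tsum hF, hPl.lintegral_eq_tsum hG,
    ← (Fin.snocEquiv fun _ => X).tsum_eq, ENNReal.tsum_prod', ENNReal.tsum_comm]
  refine tsum_congr fun q => ?_
  rw [← ENNReal.tsum_mul_right]
  refine tsum_congr fun w => ?_
  rw [show (Fin.snocEquiv fun _ => X) (w, q) = Fin.snoc q w from rfl, padPath_snoc,
    pathWeight_snocPath]
  ring

theorem IsMarkovLaw.tsum_measure_le_of_drift (hPl : IsMarkovLaw p Pl) (x : X)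
    [IsProbabilityMeasure (Pl x)] {Φ : ℕ → (ℕ → X) → ℝ≥0∞} {E : ℕ → Set (ℕ → X)}
    {c C : ℝ≥0∞} (hΦ : ∀ n, DependsOn (Φ n) (Iic n)) (hE : ∀ n, MeasurableSet (E n))
    (hC : ∀ n ω, Φ n ω ≤ C)
    (hdrift : ∀ n ω, Φ n ω + c * (E n).indicator 1 ω
      ≤ ∑' w, p (ω n) w * Φ (n + 1) (snocPath n ω w)) :
    c * ∑' n, Pl x (E n) ≤ C := by
  have hstep : ∀ n, ∫⁻ ω, Φ n ω ∂Pl x + c * Pl x (E n) ≤ ∫⁻ ω, Φ (n + 1) ω ∂Pl x :=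
      fun n => by
      rw [hPl.lintegral_eq_lintegral_tsum_step (hΦ (n + 1)), ← lintegral_indicator_one (hE n),
        ← lintegral_const_mul _ (measurable_one.indicator (hE n)),
        ← lintegral_add_left (measurable_of_dependsOn (hΦ n))]
      exact lintegral_mono (hdrift n)
  have htelescope : ∀ K, ∫⁻ ω, Φ 0 ω ∂Pl x + c * ∑ n ∈ Finset.range K, Pl x (E n)
      ≤ ∫⁻ ω, Φ K ω ∂Pl x := fun K => by
    induction K with
    | zero => simp
    | succ K ih =>
      rw [Finset.sum_range_succ, mul_add, ← add_assoc]
      exact (add_le_add_left ih _).trans (hstep K)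
  rw [← ENNReal.tsum_mul_left]
  refine ENNReal.tsum_le_of_sum_range_le fun K => ?_
  calc ∑ n ∈ Finset.range K, c * Pl x (E n)
      ≤ ∫⁻ ω, Φ K ω ∂Pl x := by rw [← Finset.mul_sum]; exact le_add_self.trans (htelescope K)
    _ ≤ ∫⁻ _, C ∂Pl x := lintegral_mono (hC K)
    _ = C := by simp

lemma IsMarkovLaw.measure_eq_tsum (hPl : IsMarkovLaw p Pl) {S : Set (ℕ → X)}
    (hS : DependsOn (· ∈ S) (Iic n)) (x : X) :
    Pl x S
      = ∑' q : Fin (n + 1) → X, S.indicator 1 (padPath n q) * pathWeight p x n (padPath n q) := by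
  rw [← lintegral_indicator_one (measurableSet_of_dependsOn hS), hPl.lintegral_eq_tsum]
  intro ω ω' h
  simp only [indicator, Pi.one_apply, (hS h).to_iff]

lemma IsMarkovLaw.measure_preimage_add_const [AddGroup X] (hPl : IsMarkovLaw p Pl)
    (hp : ∀ a b t, p (a + t) (b + t) = p a b) {S : Set (ℕ → X)}
    (hS : DependsOn (· ∈ S) (Iic n)) (x t : X) :
    Pl x {ω | (fun k => ω k + t) ∈ S} = Pl (x + t) S := by
  have hS' : DependsOn (· ∈ {ω : ℕ → X | (fun k => ω k + t) ∈ S}) (Iic n) := fun ω ω' h =>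
    hS fun i hi => by rw [h i hi]
  rw [hPl.measure_eq_tsum hS', hPl.measure_eq_tsum hS, ← (Equiv.addRight fun _ => t).tsum_eq
    (f := fun q : Fin (n + 1) → X => S.indicator 1 (padPath n q) * _)]
  refine tsum_congr fun q => ?_
  rw [show padPath n ((Equiv.addRight fun _ => t) q) = fun k => padPath n q k + t from rfl,
    pathWeight_add_const hp]
  rfl

end MarkovLaw

section CylinderWalk

variable {d N : ℕ}

lemma IsCylRW.isMarkovLaw {Pl : Cyl d N → Measure (ℕ → Cyl d N)} (hP : IsCylRW d N Pl) :
    IsMarkovLaw (stepProb d N) Pl :=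
  -- `congr` reconciles the classical and the concrete `DecidableEq` instances in the `if`.
  fun x n γ => (hP.2 x n γ).trans (by unfold pathWeight; congr)

lemma stepProb_add_const (a b t : Cyl d N) : stepProb d N (a + t) (b + t) = stepProb d N a b := by
  simp only [stepProb, add_right_comm a t, add_left_inj]

lemma tsum_stepProb_mul (y : Cyl d N) (g : Cyl d N → ℝ≥0∞) :
    ∑' w, stepProb d N y w * g w
      = (∑ e ∈ unitVecs d, g (y + projE d N e)) / (2 * (d + 1)) := by
  calc ∑' w, stepProb d N y w * g w
      = ∑' w, ∑ e ∈ unitVecs d,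
          (if w = y + projE d N e then g (y + projE d N e) else 0) / (2 * (d + 1)) := by
        refine tsum_congr fun w => ?_
        simp only [stepProb, Finset.natCast_card_filter, div_eq_mul_inv, Finset.sum_mul]
        refine Finset.sum_congr rfl fun e _ => ?_
        by_cases h : y + projE d N e = w
        · simp [h, mul_comm]
        · simp [h, Ne.symm h]
    _ = ∑ e ∈ unitVecs d, ∑' w,
          (if w = y + projE d N e then g (y + projE d N e) else 0) / (2 * (d + 1)) :=
        Summable.tsum_finsetSum fun _ _ => ENNReal.summable
    _ = _ := by simp only [div_eq_mul_inv, ENNReal.tsum_mul_right, tsum_ite_eq, Finset.sum_mul]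

lemma injective_single_sign :
    Function.Injective fun p : Fin (d + 1) × Bool =>
      (Pi.single p.1 (if p.2 then (1 : ℤ) else -1) : Lat d) := by
  rintro ⟨i, b⟩ ⟨i', b'⟩ h
  have hi := congrFun h i
  by_cases hii : i = i'
  · subst hii
    cases b <;> cases b' <;> simp_all
  · cases b <;> simp [hii] at hi

lemma tsum_stepProb_mul_snd (y : Cyl d N) (f : ℤ → ℝ≥0∞) :
    ∑' w, stepProb d N y w * f w.2
      = (2 * d * f y.2 + f (y.2 + 1) + f (y.2 - 1)) / (2 * (d + 1)) := by
  rw [tsum_stepProb_mul]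
  congr 1
  rw [unitVecs, Finset.sum_image fun p _ q _ h => injective_single_sign h,
    Fintype.sum_prod_type, Fin.sum_univ_castSucc]
  simp [projE, Pi.single_apply, Fin.castSucc_ne_last, ← sub_eq_add_neg]
  ring

lemma tsum_stepProb (y : Cyl d N) : ∑' w, stepProb d N y w = 1 := by
  have := tsum_stepProb_mul_snd y (fun _ => 1)
  simp only [mul_one] at this
  rw [this, show 2 * (d : ℝ≥0∞) + 1 + 1 = 2 * (d + 1) by ring]
  exact ENNReal.div_self (by simp) (by finiteness)

lemma natAbs_add_le_stepAvg (v : ℤ) :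
    (v.natAbs : ℝ≥0∞) + (if v = 0 then ((d : ℝ≥0∞) + 1)⁻¹ else 0)
      ≤ (2 * d * v.natAbs + (v + 1).natAbs + (v - 1).natAbs) / (2 * (d + 1)) := by
  rw [ENNReal.le_div_iff_mul_le (by simp) (.inl (by finiteness))]
  rcases eq_or_ne v 0 with rfl | hv
  · norm_num
    rw [mul_left_comm, ENNReal.inv_mul_cancel (by simp) (by simp), mul_one]
  · have hsum : (v + 1).natAbs + (v - 1).natAbs = 2 * v.natAbs := by omega
    rw [if_neg hv, add_zero, add_assoc]
    exact_mod_cast le_of_eq (show v.natAbs * (2 * (d + 1))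
      = 2 * d * v.natAbs + ((v + 1).natAbs + (v - 1).natAbs) by rw [hsum]; ring)

end CylinderWalk

section Excursion

open Set

variable {d N : ℕ} {j : ℤ}

lemma oneExc_le_coe_iff {ω : ℕ → Cyl d N} {n : ℕ} :
    oneExc d N j ω ≤ n ↔
      ∃ r ≤ n, entT (Bblk d N j) ω = r ∧ ∃ m ≤ n - r, ω (m + r) ∉ Btl d N j := by
  simp only [oneExc, after_le_coe_iff, exitT, entT_le_coe_iff]
  rfl

lemma dependsOn_oneExc_le (n : ℕ) :
    DependsOn (fun ω => oneExc d N j ω ≤ n) (Iic n) := fun ω ω' h => by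
  simp only [mem_Iic] at h
  simp only [oneExc_le_coe_iff]
  refine propext <| exists_congr fun r => and_congr_right fun hr => and_congr
    (Eq.to_iff (dependsOn_entT_eq _ r fun i hi => h i ((mem_Iic.1 hi).trans hr)))
    (exists_congr fun m => and_congr_right fun hm => by rw [h (m + r) (by omega)])

lemma oneExc_le_snocPath {ω : ℕ → Cyl d N} {n : ℕ} (w : Cyl d N) (h : oneExc d N j ω ≤ n) :
    oneExc d N j (snocPath n ω w) ≤ (n + 1 : ℕ) :=
  le_trans (((dependsOn_oneExc_le n) fun i hi => snocPath_of_le ω w (mem_Iic.1 hi)).mpr h)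
    (by exact_mod_cast n.le_succ)

lemma mem_Btl_of_entT_le {ω : ℕ → Cyl d N} {n : ℕ} (hR : entT (Bblk d N j) ω ≤ n)
    (hD : ¬ oneExc d N j ω ≤ n) : ω n ∈ Btl d N j := by
  lift entT (Bblk d N j) ω to ℕ using ne_top_of_le_ne_top (ENat.natCast_ne_top n) hR with r hr
  have hrn : r ≤ n := by exact_mod_cast hR
  by_contra hω
  exact hD <| oneExc_le_coe_iff.2
    ⟨r, hrn, hr.symm, n - r, le_rfl, by rwa [Nat.sub_add_cancel hrn]⟩

lemma oneExc_add_const {t : Cyl d N} (ht : t.2 = 0) (ω : ℕ → Cyl d N) :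
    oneExc d N j (fun k => ω k + t) = oneExc d N j ω := by
  have hB : (· + t) ⁻¹' Bblk d N j = Bblk d N j := by ext z; simp [Bblk, ht]
  have hT : (· + t) ⁻¹' (Btl d N j)ᶜ = (Btl d N j)ᶜ := by ext z; simp [Btl, ht]
  simp only [oneExc, after, exitT, entT_comp (· + t), hB, hT]

def excVisit (d N : ℕ) (j : ℤ) (n : ℕ) (S : Set (Cyl d N)) : Set (ℕ → Cyl d N) :=
  {ω | ¬ oneExc d N j ω ≤ n ∧ ω n ∈ S}

lemma dependsOn_mem_excVisit (n : ℕ) (S : Set (Cyl d N)) :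
    DependsOn (· ∈ excVisit d N j n S) (Iic n) := fun ω ω' h => by
  simp only [excVisit, mem_ofPred_eq, dependsOn_oneExc_le n h, h n (mem_Iic.2 le_rfl)]

end Excursion

section Lyapunov

open Set

variable {d N : ℕ} {j : ℤ} {a : Cyl d N}

-- Frozen at its bound `3N` once the excursion is over, so that the drift inequality persists.
noncomputable def excLyapunov (d N : ℕ) (j : ℤ) (a : Cyl d N) (n : ℕ) (ω : ℕ → Cyl d N) :
    ℝ≥0∞ :=
  if oneExc d N j ω ≤ n then (3 * N : ℕ)
  else if entT (Bblk d N j) ω ≤ n then ((ω n).2 - a.2).natAbs else 0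

lemma natAbs_snd_sub_lt (ha : a ∈ Bblk d N j) {y : Cyl d N} (hy : y ∈ Btl d N j) :
    (y.2 - a.2).natAbs < 3 * N := by
  obtain ⟨ha₁, ha₂⟩ := ha
  obtain ⟨hy₁, hy₂⟩ := hy
  have : y.2 - a.2 < 3 * N := by linarith
  have : a.2 - y.2 < 3 * N := by linarith
  omega

lemma mem_Bblk_of_snd_eq (ha : a ∈ Bblk d N j) {y : Cyl d N} (hy : y.2 = a.2) :
    y ∈ Bblk d N j := by
  simpa only [Bblk, mem_ofPred_eq, hy] using ha

lemma dependsOn_excLyapunov (n : ℕ) : DependsOn (excLyapunov d N j a n) (Iic n) :=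
  fun ω ω' h => by
    simp only [excLyapunov, dependsOn_oneExc_le n h, dependsOn_entT_le _ n h,
      h n (mem_Iic.2 le_rfl)]

lemma excLyapunov_le (ha : a ∈ Bblk d N j) (n : ℕ) (ω : ℕ → Cyl d N) :
    excLyapunov d N j a n ω ≤ (3 * N : ℕ) := by
  unfold excLyapunov
  split_ifs with hD hR
  · exact le_rfl
  · exact_mod_cast (natAbs_snd_sub_lt ha (mem_Btl_of_entT_le hR hD)).le
  · exact zero_le

lemma excLyapunov_drift (ha : a ∈ Bblk d N j) (n : ℕ) (ω : ℕ → Cyl d N) :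
    excLyapunov d N j a n ω
        + ((d : ℝ≥0∞) + 1)⁻¹ * (excVisit d N j n {y | y.2 = a.2}).indicator 1 ω
      ≤ ∑' w, stepProb d N (ω n) w * excLyapunov d N j a (n + 1) (snocPath n ω w) := by
  by_cases hD : oneExc d N j ω ≤ n
  · have hafter : ∀ w, excLyapunov d N j a (n + 1) (snocPath n ω w) = (3 * N : ℕ) := fun w =>
      if_pos (oneExc_le_snocPath w hD)
    have hnot : ω ∉ excVisit d N j n {y | y.2 = a.2} := fun hω => hω.1 hD
    rw [show excLyapunov d N j a n ω = (3 * N : ℕ) from if_pos hD, indicator_of_notMem hnot,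
      mul_zero, add_zero]
    simp only [hafter, ENNReal.tsum_mul_right, tsum_stepProb, one_mul, le_rfl]
  by_cases hR : entT (Bblk d N j) ω ≤ n
  · set z := ω n
    have hz : (z.2 - a.2).natAbs < 3 * N := natAbs_snd_sub_lt ha (mem_Btl_of_entT_le hR hD)
    let f : ℤ → ℝ≥0∞ := fun z => (min (z - a.2).natAbs (3 * N) : ℕ)
    have hafter : ∀ w, f w.2 ≤ excLyapunov d N j a (n + 1) (snocPath n ω w) := fun w => by
      simp only [f, excLyapunov, if_pos (entT_le_snocPath w hR), snocPath_succ]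
      split_ifs
      · exact_mod_cast min_le_right _ _
      · exact_mod_cast min_le_left _ _
    calc excLyapunov d N j a n ω
          + ((d : ℝ≥0∞) + 1)⁻¹ * (excVisit d N j n {y | y.2 = a.2}).indicator 1 ω
        = ((z.2 - a.2).natAbs : ℝ≥0∞) + (if z.2 - a.2 = 0 then ((d : ℝ≥0∞) + 1)⁻¹ else 0) := by
          simp [excLyapunov, excVisit, hD, not_le.1 hD, hR, indicator, sub_eq_zero, z]
      _ ≤ (2 * d * f z.2 + f (z.2 + 1) + f (z.2 - 1)) / (2 * (d + 1)) := by
          simp only [f, add_sub_right_comm z.2 1, sub_right_comm z.2 1]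
          rw [min_eq_left hz.le, min_eq_left (by omega), min_eq_left (by omega)]
          exact natAbs_add_le_stepAvg _
      _ = ∑' w, stepProb d N z w * f w.2 := (tsum_stepProb_mul_snd z f).symm
      _ ≤ _ := ENNReal.tsum_le_tsum fun w => by gcongr; exact hafter w
  · have hnot : ω ∉ excVisit d N j n {y | y.2 = a.2} := fun hω =>
      hR (entT_le_coe_iff.2 ⟨n, le_rfl, mem_Bblk_of_snd_eq ha hω.2⟩)
    simp [excLyapunov, hD, hR, hnot]

theorem tsum_measure_excVisit_level_le {Pl : Cyl d N → Measure (ℕ → Cyl d N)}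
    (hP : IsCylRW d N Pl) (ha : a ∈ Bblk d N j) (x : Cyl d N) :
    ∑' n, Pl x (excVisit d N j n {y | y.2 = a.2}) ≤ 3 * (d + 1) * N := by
  have := hP.1 x
  have hdrift := hP.isMarkovLaw.tsum_measure_le_of_drift x dependsOn_excLyapunov
    (fun n => measurableSet_of_dependsOn (dependsOn_mem_excVisit n _)) (excLyapunov_le ha)
    (excLyapunov_drift ha)
  rw [ENNReal.inv_mul_le_iff (by simp) (by simp)] at hdrift
  exact hdrift.trans_eq (by push_cast; ring)

end Lyapunov

section LawP

open Set

variable {d N : ℕ} {j : ℤ} {Pl : Cyl d N → Measure (ℕ → Cyl d N)}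

lemma lawP_apply {S : Set (ℕ → Cyl d N)} (hS : MeasurableSet S) :
    lawP d N Pl S
      = ((N : ℝ≥0∞) ^ d * (2 * N + 1))⁻¹ * ∑' x, if x ∈ Bblk d N 0 then Pl x S else 0 := by
  rw [lawP, Measure.smul_apply, Measure.sum_apply _ hS, smul_eq_mul]
  congr 1
  exact tsum_congr fun x => by split_ifs <;> simp

lemma tsum_ite_mem_Bblk_zero (hN : 0 < N) (c : ℝ≥0∞) :
    ∑' x : Cyl d N, (if x ∈ Bblk d N 0 then c else 0) = (N : ℝ≥0∞) ^ d * (2 * N + 1) * c := by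
  have : NeZero N := ⟨hN.ne'⟩
  have hB : ∀ x : Cyl d N,
      x ∈ Bblk d N 0 ↔ x ∈ (Finset.univ : Finset (Fin d → ZMod N)) ×ˢ Finset.Icc (-(N : ℤ)) N := by
    intro x
    simp [Bblk]
  simp only [hB]
  rw [tsum_eq_sum (s := _ ×ˢ Finset.Icc (-(N : ℤ)) N) fun x hx => if_neg hx,
    Finset.sum_ite_mem, Finset.inter_self, Finset.sum_const, nsmul_eq_mul, Finset.card_product,
    Finset.card_univ, Fintype.card_fun, ZMod.card, Fintype.card_fin, Int.card_Icc]
  rw [show ((N : ℤ) + 1 - -(N : ℤ)).toNat = 2 * N + 1 by omega]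
  push_cast
  ring

theorem tsum_lawP_le (hN : 0 < N) {E : ℕ → Set (ℕ → Cyl d N)} (hE : ∀ n, MeasurableSet (E n))
    {C : ℝ≥0∞} (hC : ∀ x ∈ Bblk d N 0, ∑' n, Pl x (E n) ≤ C) :
    ∑' n, lawP d N Pl (E n) ≤ C := by
  simp only [lawP_apply (hE _)]
  rw [ENNReal.tsum_mul_left, ENNReal.tsum_comm]
  calc ((N : ℝ≥0∞) ^ d * (2 * N + 1))⁻¹ * ∑' x, ∑' n, (if x ∈ Bblk d N 0 then Pl x (E n) else 0)
      ≤ ((N : ℝ≥0∞) ^ d * (2 * N + 1))⁻¹ * ∑' x : Cyl d N, (if x ∈ Bblk d N 0 then C else 0) := by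
        gcongr with x
        split_ifs with hx
        · exact hC x hx
        · simp
    _ = C := by
        rw [tsum_ite_mem_Bblk_zero hN, ← mul_assoc,
          ENNReal.inv_mul_cancel (by positivity) (by finiteness), one_mul]


lemma lawP_preimage_add_const (hP : IsCylRW d N Pl) {n : ℕ} {S : Set (ℕ → Cyl d N)}
    (hS : DependsOn (· ∈ S) (Iic n)) {t : Cyl d N} (ht : t.2 = 0) :
    lawP d N Pl {ω | (fun k => ω k + t) ∈ S} = lawP d N Pl S := by
  have hS' : DependsOn (· ∈ {ω : ℕ → Cyl d N | (fun k => ω k + t) ∈ S}) (Iic n) :=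
    fun ω ω' h => hS fun i hi => by rw [h i hi]
  rw [lawP_apply (measurableSet_of_dependsOn hS'), lawP_apply (measurableSet_of_dependsOn hS),
    ← (Equiv.addRight t).tsum_eq (f := fun x => if x ∈ Bblk d N 0 then Pl x S else 0)]
  congr 1
  refine tsum_congr fun x => ?_
  have hB : x + t ∈ Bblk d N 0 ↔ x ∈ Bblk d N 0 := by simp [Bblk, ht]
  simp only [Equiv.coe_addRight, hB,
    hP.isMarkovLaw.measure_preimage_add_const stepProb_add_const hS x t]

lemma lawP_excVisit_level (hP : IsCylRW d N Pl) (hN : 0 < N) (n : ℕ) (a : Cyl d N) :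
    lawP d N Pl (excVisit d N j n {y | y.2 = a.2})
      = (N : ℝ≥0∞) ^ d * lawP d N Pl (excVisit d N j n {a}) := by
  have : NeZero N := ⟨hN.ne'⟩
  have hunion : excVisit d N j n {y | y.2 = a.2} = ⋃ u, excVisit d N j n {(u, a.2)} := by
    ext ω
    simp only [excVisit, mem_iUnion, mem_ofPred_eq, mem_singleton_iff]
    exact ⟨fun ⟨hD, hy⟩ => ⟨(ω n).1, hD, Prod.ext rfl hy⟩, fun ⟨_, hD, hy⟩ => ⟨hD, by rw [hy]⟩⟩
  have hshift (u : Fin d → ZMod N) :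
      lawP d N Pl (excVisit d N j n {(u, a.2)}) = lawP d N Pl (excVisit d N j n {a}) := by
    rw [← lawP_preimage_add_const hP (dependsOn_mem_excVisit n _) (t := (u - a.1, 0)) rfl]
    congr 1
    ext ω
    simp only [excVisit, mem_ofPred_eq, mem_singleton_iff,
      oneExc_add_const (rfl : ((u - a.1, 0) : Cyl d N).2 = 0)]
    rw [show ((u, a.2) : Cyl d N) = a + (u - a.1, 0) by ext <;> simp, add_left_inj]
  rw [hunion, measure_iUnion ?_ fun u => measurableSet_of_dependsOn (dependsOn_mem_excVisit n _),
    tsum_fintype, Finset.sum_congr rfl fun u _ => hshift u, Finset.sum_const, Finset.card_univ,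
    Fintype.card_fun, ZMod.card, Fintype.card_fin, nsmul_eq_mul, Nat.cast_pow]
  intro u u' hne
  exact disjoint_left.2 fun ω hu hu' => hne (Prod.ext_iff.1 (hu.2.symm.trans hu'.2)).1

end LawP

section Main

open Set

variable {d N : ℕ} {j : ℤ} {Pl : Cyl d N → Measure (ℕ → Cyl d N)}

lemma Cblk_subset_Bblk : Cblk d N j ⊆ Bblk d N j := fun y ⟨hy₁, hy₂⟩ => by
  have hN : (0 : ℝ) ≤ N := N.cast_nonneg
  constructor
  · exact_mod_cast (show (((j - 1) * N : ℤ) : ℝ) ≤ y.2 by push_cast; nlinarith)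
  · exact_mod_cast (show (y.2 : ℝ) ≤ ((j + 1) * N : ℤ) by push_cast; nlinarith)

lemma DD_one (ω : ℕ → Cyl d N) : DD d N j 1 ω = oneExc d N j ω := by
  simp [DD, after]

lemma setOf_entT_lt_DD_one_subset (A : Finset (Cyl d N)) :
    {ω | entT (↑A : Set (Cyl d N)) ω < DD d N j 1 ω} ⊆ ⋃ n, ⋃ a ∈ A, excVisit d N j n {a} := by
  intro ω hω
  simp only [mem_ofPred_eq, DD_one] at hω
  lift entT (↑A : Set (Cyl d N)) ω to ℕ using hω.ne_top with m hm
  obtain ⟨k, hkm, hk⟩ := entT_le_coe_iff.1 hm.symm.le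
  simp only [mem_iUnion]
  exact ⟨k, ω k, hk, fun hD => hω.not_ge (le_trans hD (by exact_mod_cast hkm)), rfl⟩

lemma tsum_lawP_excVisit_singleton_le (hP : IsCylRW d N Pl) (hN : 0 < N) {a : Cyl d N}
    (ha : a ∈ Bblk d N j) :
    ∑' n, lawP d N Pl (excVisit d N j n {a}) ≤ 3 * (d + 1) * N / (N : ℝ≥0∞) ^ d := by
  rw [ENNReal.le_div_iff_mul_le (.inl (by positivity)) (.inl (by finiteness)), mul_comm,
    ← ENNReal.tsum_mul_left]
  simp only [← lawP_excVisit_level hP hN]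
  exact tsum_lawP_le hN (fun n => measurableSet_of_dependsOn (dependsOn_mem_excVisit n _))
    fun x _ => tsum_measure_excVisit_level_le hP ha x

lemma lawP_entT_lt_DD_one_le (hP : IsCylRW d N Pl) (hN : 0 < N) {A : Finset (Cyl d N)}
    (hA : (↑A : Set (Cyl d N)) ⊆ Bblk d N j) :
    lawP d N Pl {ω | entT (↑A : Set (Cyl d N)) ω < DD d N j 1 ω}
      ≤ A.card * (3 * (d + 1) * N / (N : ℝ≥0∞) ^ d) :=
  calc _ ≤ lawP d N Pl (⋃ n, ⋃ a ∈ A, excVisit d N j n {a}) :=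
        measure_mono (setOf_entT_lt_DD_one_subset A)
    _ ≤ ∑' n, ∑ a ∈ A, lawP d N Pl (excVisit d N j n {a}) :=
        (measure_iUnion_le _).trans (ENNReal.tsum_le_tsum fun n => measure_biUnion_finset_le _ _)
    _ = ∑ a ∈ A, ∑' n, lawP d N Pl (excVisit d N j n {a}) :=
        Summable.tsum_finsetSum fun _ _ => ENNReal.summable
    _ ≤ ∑ a ∈ A, 3 * (d + 1) * N / (N : ℝ≥0∞) ^ d :=
        Finset.sum_le_sum fun a ha => tsum_lawP_excVisit_singleton_le hP hN (hA ha)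
    _ = _ := by rw [Finset.sum_const, nsmul_eq_mul]

end Main

/-- **(1.20).** For `d ≥ 3` there is a constant `c` depending only on `d` such that for
all `N ≥ 2`, all `j ∈ ℤ` and every nonempty `A ⊆ C_j`,
`P[H_A < D^j_1] ≤ c |A| / N^{d-1}`. -/
theorem statement_13 (d : ℕ) (hd : 3 ≤ d) :
    ∃ c : ℝ, 0 < c ∧
      ∀ N : ℕ, 2 ≤ N → ∀ Pl : Cyl d N → Measure (ℕ → Cyl d N), IsCylRW d N Pl →
      ∀ j : ℤ, ∀ A : Finset (Cyl d N), A.Nonempty → (↑A : Set (Cyl d N)) ⊆ Cblk d N j →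
        ((lawP d N Pl) {ω | entT (↑A : Set (Cyl d N)) ω < DD d N j 1 ω}).toReal
          ≤ c * A.card / (N : ℝ) ^ (d - 1) := by
  refine ⟨3 * (d + 1), by positivity, fun N hN Pl hP j A _ hAC => ?_⟩
  have hN0 : 0 < N := by omega
  have hbound := lawP_entT_lt_DD_one_le hP hN0 (hAC.trans Cblk_subset_Bblk)
  refine (ENNReal.toReal_mono (by finiteness) hbound).trans (le_of_eq ?_)
  obtain ⟨e, rfl⟩ : ∃ e, d = e + 1 := ⟨d - 1, by omega⟩
  have : (N : ℝ) ≠ 0 := by positivity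
  simp only [Nat.cast_add, Nat.cast_one, pow_succ, ENNReal.toReal_mul, ENNReal.toReal_natCast,
    ENNReal.toReal_div, ENNReal.toReal_ofNat, ne_eq, ENNReal.add_eq_top, ENNReal.natCast_ne_top,
    ENNReal.one_ne_top, or_self, not_false_eq_true, ENNReal.toReal_add, ENNReal.toReal_one,
    ENNReal.toReal_pow, add_tsub_cancel_right]
  field_simp

end DiscCyl
end
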